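/- (Sketch-size corollary.) Let m, c be positive integers and 0 < δ ≤ 1. Let v : Fin N → ℝ≥0 be a weighted set with |supp(v)| ≤ m, and let C ⊆ Fin N be a candidate set with supp(v) ⊆ C and |C| ≤ c · m. If N_W > 2m and δ · 2^{N_D} > c · m (equivalently, N_D > log₂(cm/δ)), then for H drawn uniformly at random in the random-hash model, with probability at least 1 − δ all weights of v are recovered: CM_H(i, S_H(v)) = v i for every i ∈ C. -/

import Mathlib

/-! The count-min lookup of `i` overestimates `v i` only through collisions, so it is exact as soon
as one row `h_j` separates `i` from the rest of `supp v`. A single uniform hash sends one of the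
at most `m` other support points to the bucket of `i` with probability at most `m / N_W < 1/2`;
the rows are independent, so all `N_D` of them fail with probability below `2^{-N_D}`, and a
union bound over the at most `c m` candidates leaves a failure probability below
`c m / 2^{N_D} < δ`. All probabilities are counted as cardinalities of sets of hash families. -/

open Finset

/-- The primitive sketch of a weighted set `v` under hash function `h`. -/
def sketch {N NW : ℕ} (h : Fin N → Fin NW) (v : Fin N → NNReal) : Fin NW → NNReal :=
  fun k => ∑ i ∈ Finset.univ.filter (fun i => h i = k), v i

/-- The support of a weighted set, as a finset. -/
noncomputable def supp {N : ℕ} (v : Fin N → NNReal) : Finset (Fin N) :=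
  Finset.univ.filter (fun i => v i ≠ 0)

/-- The count-min sketch of `v` under the family `H`: the `j`-th row is the
primitive sketch of `v` under `H j`. -/
def cmSketch {N NW ND : ℕ} (H : Fin ND → Fin N → Fin NW) (v : Fin N → NNReal) :
    Fin ND → Fin NW → NNReal :=
  fun j => sketch (H j) v

/-- The count-min lookup of `i` in an `ND × NW` matrix `M`, relative to the
family `H`: the minimum over `j` of `M[j, h_j(i)]`. -/
noncomputable def cmLookup {N NW ND : ℕ} (H : Fin ND → Fin N → Fin NW)
    (M : Fin ND → Fin NW → NNReal) (i : Fin N) : NNReal :=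
  ⨅ j, M j (H j i)

def Collides {α β : Type*} (h : α → β) (s : Finset α) (i : α) : Prop :=
  ∃ i' ∈ s, i' ≠ i ∧ h i' = h i

instance {α β : Type*} [DecidableEq α] [DecidableEq β] (h : α → β) (s : Finset α) (i : α) :
    Decidable (Collides h s i) :=
  inferInstanceAs (Decidable (∃ i' ∈ s, i' ≠ i ∧ h i' = h i))

section Recovery

variable {N NW : ℕ}

lemma le_sketch_apply (h : Fin N → Fin NW) (v : Fin N → NNReal) (i : Fin N) :
    v i ≤ sketch h v (h i) :=
  single_le_sum (fun _ _ => zero_le) (by simp)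

lemma sketch_apply_eq_of_not_collides {h : Fin N → Fin NW} {v : Fin N → NNReal} {i : Fin N}
    (hi : ¬ Collides h (supp v) i) : sketch h v (h i) = v i := by
  refine sum_eq_single i (fun i' hi' hne => ?_) (by simp)
  by_contra hv
  exact hi ⟨i', by simpa [supp] using hv, hne, by simpa using hi'⟩

lemma cmLookup_cmSketch_eq_of_not_collides {ND : ℕ} {H : Fin ND → Fin N → Fin NW}
    {v : Fin N → NNReal} {i : Fin N} (j : Fin ND) (hj : ¬ Collides (H j) (supp v) i) :
    cmLookup H (cmSketch H v) i = v i := by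
  have : Nonempty (Fin ND) := ⟨j⟩
  refine le_antisymm ?_ (le_ciInf fun j' => le_sketch_apply (H j') v i)
  calc cmLookup H (cmSketch H v) i ≤ sketch (H j) v (H j i) := ciInf_le (OrderBot.bddBelow _) j
    _ = v i := sketch_apply_eq_of_not_collides hj

end Recovery

section Counting

variable {ι α β : Type*} [Fintype ι] [DecidableEq ι] [Fintype α] [DecidableEq α]
  [Fintype β] [DecidableEq β]

lemma card_filter_apply_eq_apply {a b : α} (hab : a ≠ b) :
    #{f : α → β | f a = f b} = Fintype.card β ^ (Fintype.card α - 1) := by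
  have e : {f : α → β // f a = f b} ≃ ({j // j ≠ a} → β) :=
    { toFun f j := f.1 j
      invFun g := ⟨fun j => if h : j = a then g ⟨b, hab.symm⟩ else g ⟨j, h⟩, by simp [hab.symm]⟩
      left_inv f := by ext j; by_cases h : j = a <;> simp [h, f.2]
      right_inv g := by ext j; simp [j.2] }
  rw [← Fintype.card_subtype, Fintype.card_congr e, Fintype.card_fun,
    Fintype.card_subtype_compl, Fintype.card_subtype_eq]

lemma card_filter_collides_le (s : Finset α) (i : α) :
    #{h : α → β | Collides h s i} ≤ #s * Fintype.card β ^ (Fintype.card α - 1) := by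
  have hsub : ({h : α → β | Collides h s i} : Finset _) ⊆
      (s.erase i).biUnion fun i' => {h : α → β | h i' = h i} := by
    rintro h hh
    obtain ⟨i', hi', hne, heq⟩ := (mem_filter.1 hh).2
    exact mem_biUnion.2 ⟨i', mem_erase.2 ⟨hne, hi'⟩, by simp [heq]⟩
  calc #{h : α → β | Collides h s i}
      ≤ #(s.erase i) * Fintype.card β ^ (Fintype.card α - 1) :=
        (card_le_card hsub).trans <| card_biUnion_le_card_mul _ _ _ fun i' hi' =>
          (card_filter_apply_eq_apply (mem_erase.1 hi').1).le
    _ ≤ #s * Fintype.card β ^ (Fintype.card α - 1) := Nat.mul_le_mul_right _ card_erase_le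

lemma two_mul_card_filter_collides_le {s : Finset α} (hs : 2 * #s < Fintype.card β) (i : α) :
    2 * #{h : α → β | Collides h s i} ≤ Fintype.card (α → β) := by
  have hα : Fintype.card α - 1 + 1 = Fintype.card α :=
    Nat.sub_add_cancel (Fintype.card_pos_iff.2 ⟨i⟩)
  calc 2 * #{h : α → β | Collides h s i}
      ≤ 2 * #s * Fintype.card β ^ (Fintype.card α - 1) := by
        rw [mul_assoc]; exact Nat.mul_le_mul_left 2 (card_filter_collides_le s i)
    _ ≤ Fintype.card β * Fintype.card β ^ (Fintype.card α - 1) := Nat.mul_le_mul_right _ hs.le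
    _ = Fintype.card (α → β) := by rw [Fintype.card_fun, ← pow_succ', hα]

lemma card_filter_forall_collides (s : Finset α) (i : α) :
    #{H : ι → α → β | ∀ j, Collides (H j) s i} =
      #{h : α → β | Collides h s i} ^ Fintype.card ι := by
  have : ({H : ι → α → β | ∀ j, Collides (H j) s i} : Finset _) =
      Fintype.piFinset fun _ => {h : α → β | Collides h s i} := by
    ext H; simp
  rw [this, Fintype.card_piFinset, prod_const, card_univ]

lemma two_pow_mul_card_filter_forall_collides_le {s : Finset α} (hs : 2 * #s < Fintype.card β)
    (i : α) :
    2 ^ Fintype.card ι * #{H : ι → α → β | ∀ j, Collides (H j) s i} ≤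
      Fintype.card (ι → α → β) := by
  rw [card_filter_forall_collides, ← mul_pow, Fintype.card_fun (α := ι)]
  exact Nat.pow_le_pow_left (two_mul_card_filter_collides_le hs i) _

lemma two_pow_mul_card_filter_exists_forall_collides_le {s : Finset α}
    (hs : 2 * #s < Fintype.card β) (C : Finset α)
    [DecidablePred fun H : ι → α → β => ∃ i ∈ C, ∀ j, Collides (H j) s i] :
    2 ^ Fintype.card ι * #{H : ι → α → β | ∃ i ∈ C, ∀ j, Collides (H j) s i} ≤
      #C * Fintype.card (ι → α → β) := by
  have : ({H : ι → α → β | ∃ i ∈ C, ∀ j, Collides (H j) s i} : Finset _) =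
      C.biUnion fun i => {H : ι → α → β | ∀ j, Collides (H j) s i} := by
    ext H; simp
  calc 2 ^ Fintype.card ι * #{H : ι → α → β | ∃ i ∈ C, ∀ j, Collides (H j) s i}
      ≤ ∑ i ∈ C, 2 ^ Fintype.card ι * #{H : ι → α → β | ∀ j, Collides (H j) s i} := by
        rw [this, ← mul_sum]; exact Nat.mul_le_mul_left _ card_biUnion_le
    _ ≤ #C * Fintype.card (ι → α → β) := by
        rw [← smul_eq_mul, ← sum_const]
        exact sum_le_sum fun i _ => two_pow_mul_card_filter_forall_collides_le hs i

end Counting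

theorem sketch_size_recovery_general
    {N NW ND : ℕ}
    (m c : ℕ)
    (δ : ℝ)
    (v : Fin N → NNReal) (hsupp : (supp v).card ≤ m)
    (C : Finset (Fin N)) (hC : C.card ≤ c * m)
    (hW : 2 * m < NW)
    (hD : ((c * m : ℕ) : ℝ) < δ * 2 ^ ND) :
    (1 : ℝ) - δ ≤
      ((Finset.univ.filter (fun H : Fin ND → Fin N → Fin NW =>
          ∀ i ∈ C, cmLookup H (cmSketch H v) i = v i)).card : ℝ)
        / (Fintype.card (Fin ND → Fin N → Fin NW) : ℝ) := by
  set T := Fintype.card (Fin ND → Fin N → Fin NW)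
  set good := univ.filter fun H : Fin ND → Fin N → Fin NW =>
    ∀ i ∈ C, cmLookup H (cmSketch H v) i = v i
  set bad : Finset _ := {H : Fin ND → Fin N → Fin NW | ∃ i ∈ C, ∀ j, Collides (H j) (supp v) i}
  have hbad : 2 ^ ND * #bad ≤ c * m * T := by
    have hs : 2 * #(supp v) < Fintype.card (Fin NW) := by rw [Fintype.card_fin]; omega
    have := two_pow_mul_card_filter_exists_forall_collides_le (ι := Fin ND) hs C
    rw [Fintype.card_fin] at this
    exact this.trans (Nat.mul_le_mul_right T hC)
  have hrecover : badᶜ ⊆ good := fun H hH => by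
    simp only [bad, good, mem_compl, mem_filter, mem_univ, true_and, not_exists, not_and,
      not_forall] at hH ⊢
    intro i hi
    obtain ⟨j, hj⟩ := hH i hi
    exact cmLookup_cmSketch_eq_of_not_collides j hj
  have hcover : T ≤ #good + #bad := by
    have := card_le_card hrecover
    have := card_add_card_compl bad
    omega
  have hT : 0 < T := Fintype.card_pos_iff.2 ⟨fun _ _ => ⟨0, by omega⟩⟩
  have hbadR : (2 ^ ND : ℝ) * #bad ≤ (c * m : ℕ) * T := by exact_mod_cast hbad
  have hcoverR : (T : ℝ) ≤ #good + #bad := by exact_mod_cast hcover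
  have hbadδ : (#bad : ℝ) ≤ δ * T :=
    le_of_mul_le_mul_left (a := 2 ^ ND) (by nlinarith) (by positivity)
  rw [le_div_iff₀ (by exact_mod_cast hT)]
  linarith

/-- Sketch-size corollary: if `|supp v| ≤ m`, `supp v ⊆ C`, `|C| ≤ c * m`,
`NW > 2 * m` and `δ * 2 ^ ND > c * m` (with `0 < δ ≤ 1`), then for `H` drawn
uniformly at random, with probability at least `1 - δ` all weights of `v` are
recovered: `CM_H(i, S_H(v)) = v i` for every `i ∈ C`. -/
theorem sketch_size_recovery
    {N NW ND : ℕ} (hN : 0 < N) (hNW : 0 < NW) (hND : 0 < ND)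
    (m c : ℕ) (hm : 0 < m) (hc : 0 < c)
    (δ : ℝ) (hδ0 : 0 < δ) (hδ1 : δ ≤ 1)
    (v : Fin N → NNReal) (hsupp : (supp v).card ≤ m)
    (C : Finset (Fin N)) (hsub : supp v ⊆ C) (hC : C.card ≤ c * m)
    (hW : 2 * m < NW)
    (hD : ((c * m : ℕ) : ℝ) < δ * 2 ^ ND) :
    (1 : ℝ) - δ ≤
      ((Finset.univ.filter (fun H : Fin ND → Fin N → Fin NW =>
          ∀ i ∈ C, cmLookup H (cmSketch H v) i = v i)).card : ℝ)
        / (Fintype.card (Fin ND → Fin N → Fin NW) : ℝ) :=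
  sketch_size_recovery_general m c δ v hsupp C hC hW hD
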